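/- arXiv:1905.06293 — 5 statements merged into one kernel-verified Lean document; each statement's English description precedes it below -/
import Mathlib

section
/- For every integer n ≥ 1, the path P_n on n vertices satisfies pid(P_n) = ⌈(n+1)/2⌉. -/
open scoped Classical

/-- `f : V → ℕ` is a perfect Italian dominating function of `G`:
labels are in `{0,1,2}` and every vertex labeled `0` has neighbor labels summing to exactly `2`. -/
def IsPIDFun {V : Type*} [Fintype V] (G : SimpleGraph V) (f : V → ℕ) : Prop :=
  (∀ v, f v ≤ 2) ∧ ∀ v, f v = 0 → (∑ u, if G.Adj v u then f u else 0) = 2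

/-- The perfect Italian domination number: minimum weight of a PID-function. -/
noncomputable def pid {V : Type*} [Fintype V] (G : SimpleGraph V) : ℕ :=
  sInf {w | ∃ f, IsPIDFun G f ∧ w = ∑ v, f v}

/-!
Lower bound: a vertex labelled 0 receives exactly 2 from its neighbours, so when every degree is
at most 2, double counting gives `2 · #zeros ≤ ∑ deg u · f u ≤ 2 · weight`, while labels at most 2
give `#nonzeros + #twos ≤ weight`. A vertex `v₀` of degree at most 1 makes one of these strict:
if `f v₀ = 0` the 2 it receives comes from a single neighbour labelled 2, and if `f v₀ > 0` it
contributes less than `2 · f v₀` to the degree-weighted sum. Either way `n + 1 ≤ 2 · weight`.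

Upper bound: label the even positions and the last vertex of the path by 1.
-/

open Finset SimpleGraph

section General

variable {V : Type*} [Fintype V] {G : SimpleGraph V} {f : V → ℕ}

theorem isPIDFun_one : IsPIDFun G 1 :=
  ⟨fun _ => by simp, fun _ h => by simp at h⟩

theorem IsPIDFun.pid_le (hf : IsPIDFun G f) : pid G ≤ ∑ v, f v :=
  Nat.sInf_le ⟨f, hf, rfl⟩

theorem le_pid {w : ℕ} (h : ∀ f, IsPIDFun G f → w ≤ ∑ v, f v) : w ≤ pid G :=
  le_csInf ⟨_, 1, isPIDFun_one, rfl⟩ fun _ ⟨f, hf, hw⟩ => hw ▸ h f hf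

theorem IsPIDFun.sum_neighborFinset (hf : IsPIDFun G f) {v : V} (hv : f v = 0) :
    ∑ u ∈ G.neighborFinset v, f u = 2 := by
  rw [neighborFinset_eq_filter, sum_filter]
  exact hf.2 v hv

theorem IsPIDFun.card_ne_zero_add_card_eq_two_le (hf : IsPIDFun G f) :
    #{v | f v ≠ 0} + #{v | f v = 2} ≤ ∑ v, f v := by
  simp only [card_filter]
  rw [← sum_add_distrib]
  refine sum_le_sum fun v _ => ?_
  have := hf.1 v
  split_ifs <;> omega

theorem IsPIDFun.two_mul_card_eq_zero_le (hf : IsPIDFun G f) :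
    2 * #{v | f v = 0} ≤ ∑ u, G.degree u * f u :=
  calc 2 * #{v | f v = 0} = ∑ v with f v = 0, ∑ u ∈ G.neighborFinset v, f u := by
        rw [sum_congr rfl fun v hv => hf.sum_neighborFinset (mem_filter.1 hv).2, sum_const,
          smul_eq_mul, mul_comm]
    _ ≤ ∑ v, ∑ u ∈ G.neighborFinset v, f u := sum_le_sum_of_subset (subset_univ _)
    _ = ∑ u, G.degree u * f u := by
        simp only [neighborFinset_eq_filter, sum_filter]
        rw [sum_comm]
        refine sum_congr rfl fun u _ => ?_
        rw [← card_neighborFinset_eq_degree, neighborFinset_eq_filter, card_filter, sum_mul]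
        simp [G.adj_comm]

theorem IsPIDFun.exists_eq_two_of_degree_le_one (hf : IsPIDFun G f) {v : V}
    (hdeg : G.degree v ≤ 1) (hv : f v = 0) : ∃ u, f u = 2 := by
  by_contra! h
  have hle : ∑ u ∈ G.neighborFinset v, f u ≤ #(G.neighborFinset v) • 1 :=
    sum_le_card_nsmul _ _ _ fun u _ => by have := hf.1 u; have := h u; omega
  rw [hf.sum_neighborFinset hv, card_neighborFinset_eq_degree, smul_eq_mul] at hle
  omega

theorem SimpleGraph.sum_degree_mul_add_le_two_mul_sum (f : V → ℕ) (hdeg : ∀ v, G.degree v ≤ 2)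
    {v₀ : V} (hv₀ : G.degree v₀ ≤ 1) : ∑ u, G.degree u * f u + f v₀ ≤ 2 * ∑ u, f u := by
  rw [← Fintype.sum_ite_eq' v₀ f, ← sum_add_distrib, mul_sum]
  refine sum_le_sum fun u _ => ?_
  split_ifs with h
  · subst h
    nlinarith
  · simpa using Nat.mul_le_mul_right (f u) (hdeg u)

theorem IsPIDFun.card_add_one_le_two_mul_sum (hf : IsPIDFun G f) (hdeg : ∀ v, G.degree v ≤ 2)
    {v₀ : V} (hv₀ : G.degree v₀ ≤ 1) : Fintype.card V + 1 ≤ 2 * ∑ v, f v := by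
  have hsplit : #{v | f v ≠ 0} + #{v | f v = 0} = Fintype.card V := by
    rw [add_comm, card_filter_add_card_filter_not]
    rfl
  have hweight := hf.card_ne_zero_add_card_eq_two_le
  have hzeros := hf.two_mul_card_eq_zero_le
  have hdegsum := sum_degree_mul_add_le_two_mul_sum f hdeg hv₀
  rcases Nat.eq_zero_or_pos (f v₀) with hzero | hpos
  · obtain ⟨u, hu⟩ := hf.exists_eq_two_of_degree_le_one hv₀ hzero
    have : 0 < #{v | f v = 2} := card_pos.2 ⟨u, by simp [hu]⟩
    omega
  · omega

end General

theorem SimpleGraph.pathGraph_degree_le_two {n : ℕ} (v : Fin n) : (pathGraph n).degree v ≤ 2 := by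
  rw [← card_neighborFinset_eq_degree]
  calc #((pathGraph n).neighborFinset v) ≤ #({v.val - 1, v.val + 1} : Finset ℕ) :=
        card_le_card_of_injOn Fin.val (fun u hu => by simp [pathGraph_adj] at hu ⊢; omega)
          Fin.val_injective.injOn
    _ ≤ 2 := card_le_two

theorem SimpleGraph.pathGraph_degree_zero_le_one {n : ℕ} (hn : 0 < n) :
    (pathGraph n).degree ⟨0, hn⟩ ≤ 1 := by
  rw [← card_neighborFinset_eq_degree]
  calc #((pathGraph n).neighborFinset ⟨0, hn⟩) ≤ #({1} : Finset ℕ) :=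
        card_le_card_of_injOn Fin.val (fun u hu => by simp [pathGraph_adj] at hu ⊢; omega)
          Fin.val_injective.injOn
    _ = 1 := card_singleton 1

theorem SimpleGraph.pathGraph_sum_adj {n : ℕ} (f : Fin n → ℕ) (v : Fin n) (h₀ : 0 < v.val)
    (h₁ : v.val + 1 < n) :
    (∑ u, if (pathGraph n).Adj v u then f u else 0) = f ⟨v - 1, by omega⟩ + f ⟨v + 1, h₁⟩ := by
  rw [Fintype.sum_eq_add ⟨v - 1, by omega⟩ ⟨v + 1, h₁⟩ (by simp [Fin.ext_iff])]
  · simp [pathGraph_adj]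
    omega
  · intro u hu
    simp [Fin.ext_iff, pathGraph_adj] at hu ⊢
    omega

def evenOrLastIndicator (n : ℕ) (v : Fin n) : ℕ :=
  if v.val % 2 = 0 ∨ v.val + 1 = n then 1 else 0

theorem isPIDFun_evenOrLastIndicator (n : ℕ) : IsPIDFun (pathGraph n) (evenOrLastIndicator n) := by
  refine ⟨fun v => by unfold evenOrLastIndicator; split_ifs <;> omega, fun v hv => ?_⟩
  have hodd_interior : v.val % 2 = 1 ∧ v.val + 1 ≠ n := by
    unfold evenOrLastIndicator at hv
    split_ifs at hv with h
    omega
  rw [pathGraph_sum_adj _ v (by omega) (by omega)]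
  simp only [evenOrLastIndicator]
  split_ifs <;> omega

theorem sum_range_ite_mod_two_eq_zero (m : ℕ) :
    ∑ i ∈ range m, (if i % 2 = 0 then 1 else 0) = (m + 1) / 2 := by
  induction m with
  | zero => rfl
  | succ m ih =>
    rw [sum_range_succ, ih]
    split_ifs <;> omega

theorem sum_evenOrLastIndicator (m : ℕ) : ∑ v, evenOrLastIndicator (m + 1) v = (m + 3) / 2 := by
  have hlast : evenOrLastIndicator (m + 1) (Fin.last m) = 1 := by simp [evenOrLastIndicator]
  have hinit (i : Fin m) :
      evenOrLastIndicator (m + 1) i.castSucc = if i.val % 2 = 0 then 1 else 0 := by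
    simp [evenOrLastIndicator, i.isLt.ne]
  rw [Fin.sum_univ_castSucc, hlast, Fintype.sum_congr _ _ hinit,
    Fin.sum_univ_eq_sum_range (fun i => if i % 2 = 0 then 1 else 0), sum_range_ite_mod_two_eq_zero]
  omega

/-- For every `n ≥ 1`, the path on `n` vertices has perfect Italian domination
number `⌈(n+1)/2⌉`. -/
theorem pid_pathGraph (n : ℕ) (hn : 1 ≤ n) :
    pid (SimpleGraph.pathGraph n) = (n + 1 + 1) / 2 := by
  obtain ⟨m, rfl⟩ : ∃ m, n = m + 1 := ⟨n - 1, by omega⟩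
  refine le_antisymm ?_ (le_pid fun f hf => ?_)
  · calc pid (pathGraph (m + 1)) ≤ ∑ v, evenOrLastIndicator (m + 1) v :=
          (isPIDFun_evenOrLastIndicator _).pid_le
      _ = (m + 1 + 1 + 1) / 2 := sum_evenOrLastIndicator m
  · have hbound := hf.card_add_one_le_two_mul_sum pathGraph_degree_le_two
      (pathGraph_degree_zero_le_one m.succ_pos)
    rw [Fintype.card_fin] at hbound
    omega
end

section
/- Every connected threshold graph on at least two vertices has perfect Italian domination number equal to 2. -/
open scoped Classical

/-- `G` is a threshold graph: its vertices can be ordered `e 0, e 1, …` so that each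
vertex `e j` is, at the moment of its addition, either dominating (adjacent to all
earlier vertices, when `d j = true`) or isolated (adjacent to no earlier vertex,
when `d j = false`). -/
def IsThresholdGraph {V : Type*} [Fintype V] (G : SimpleGraph V) : Prop :=
  ∃ (e : Fin (Fintype.card V) ≃ V) (d : Fin (Fintype.card V) → Bool),
    ∀ i j, i < j → (G.Adj (e i) (e j) ↔ d j = true)

/-!
The last vertex of a threshold construction is adjacent to every other vertex or to none;
connectivity rules out the second case. Labelling that dominating vertex `2` and all others `0`
is a PID-function of weight `2`. Conversely every PID-function on at least two vertices has
weight at least `2`: either some vertex is labelled `0`, and its neighbours alone carry weight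
`2`, or every label is at least `1`.
-/

section

variable {V : Type*} [Fintype V] {G : SimpleGraph V}

lemma IsPIDFun.two_le_sum {f : V → ℕ} (hf : IsPIDFun G f) (hcard : 2 ≤ Fintype.card V) :
    2 ≤ ∑ v, f v := by
  by_cases hzero : ∃ v, f v = 0
  · obtain ⟨v, hv⟩ := hzero
    calc 2 = ∑ u, if G.Adj v u then f u else 0 := (hf.2 v hv).symm
      _ ≤ ∑ u, f u := Finset.sum_le_sum fun u _ => by split <;> omega
  · push Not at hzero
    calc 2 ≤ ∑ _v : V, 1 := by simpa using hcard
      _ ≤ ∑ v, f v := Finset.sum_le_sum fun v _ => Nat.one_le_iff_ne_zero.2 (hzero v)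

lemma isPIDFun_ite_eq_two {u : V} (hu : ∀ v, v ≠ u → G.Adj v u) :
    IsPIDFun G (fun v => if v = u then 2 else 0) := by
  refine ⟨fun v => by dsimp only; split <;> omega, fun v hv => ?_⟩
  have hvu : v ≠ u := by rintro rfl; simp at hv
  have hterm : ∀ x, (if G.Adj v x then (if x = u then 2 else 0) else 0) =
      if x = u then 2 else 0 := by
    intro x
    split_ifs with hx hxu <;> simp_all
  simp [hterm]

lemma pid_eq_two_of_forall_adj (hcard : 2 ≤ Fintype.card V) {u : V}
    (hu : ∀ v, v ≠ u → G.Adj v u) : pid G = 2 := by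
  have hmem : 2 ∈ {w | ∃ f, IsPIDFun G f ∧ w = ∑ v, f v} :=
    ⟨_, isPIDFun_ite_eq_two hu, by simp⟩
  refine le_antisymm (Nat.sInf_le hmem) (le_csInf ⟨2, hmem⟩ ?_)
  rintro w ⟨f, hf, rfl⟩
  exact hf.two_le_sum hcard

lemma IsThresholdGraph.exists_forall_adj [Nontrivial V] (hthr : IsThresholdGraph G)
    (hconn : G.Preconnected) : ∃ u, ∀ v, v ≠ u → G.Adj v u := by
  obtain ⟨e, d, hd⟩ := hthr
  have : NeZero (Fintype.card V) := ⟨Fintype.card_ne_zero⟩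
  have hlt : ∀ v, v ≠ e ⊤ → e.symm v < ⊤ := fun v hv =>
    lt_top_iff_ne_top.2 fun h => hv (by rw [← h, Equiv.apply_symm_apply])
  have hdom : d ⊤ = true := by
    obtain ⟨w, hw⟩ := hconn.exists_adj_of_nontrivial (e ⊤)
    exact (hd _ ⊤ (hlt w hw.ne.symm)).1 (by simpa using hw.symm)
  exact ⟨e ⊤, fun v hv => by simpa using (hd _ ⊤ (hlt v hv)).2 hdom⟩

end

/-- Every connected threshold graph on at least two vertices has
perfect Italian domination number `2`. -/
theorem pid_threshold {V : Type*} [Fintype V] (G : SimpleGraph V)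
    (hthr : IsThresholdGraph G) (hconn : G.Connected) (hcard : 2 ≤ Fintype.card V) :
    pid G = 2 := by
  have := Fintype.one_lt_card_iff_nontrivial.1 hcard
  obtain ⟨u, hu⟩ := hthr.exists_forall_adj hconn.preconnected
  exact pid_eq_two_of_forall_adj hcard hu
end

section
/- Let G be a connected finite simple graph with pid(G) = 3. Then every PID-function f of G of weight 3 assigns the label 1 to exactly three vertices and assigns the label 2 to no vertex. -/
open scoped Classical

/-!
If a PID-function `f` of weight `3` had a label `2` at `a`, the remaining weight `1` sits on a
single vertex `b`. A vertex labelled `0` then sees the neighbour labels `2` (from `a`) and `1`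
(from `b`), so it must be adjacent to `a` and not to `b`. Hence no neighbour of `b` carries
label `0`, and connectivity forces `b` to be adjacent to `a`. So `a` is adjacent to every other
vertex, and the label `2` on `a` alone is a PID-function of weight `2 < pid G`. Without a
label `2`, all labels are `0` or `1`, and the weight counts the vertices labelled `1`.
-/

open Finset

lemma Finset.exists_eq_one_of_sum_eq_one {ι : Type*} {s : Finset ι} {f : ι → ℕ}
    (h : ∑ i ∈ s, f i = 1) : ∃ b ∈ s, f b = 1 ∧ ∀ c ∈ s, c ≠ b → f c = 0 := by
  obtain ⟨b, hb, hb0⟩ := exists_ne_zero_of_sum_ne_zero (h ▸ one_ne_zero)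
  have hsplit := add_sum_erase s f hb
  refine ⟨b, hb, by omega, fun c hc hcb => ?_⟩
  have hrest : ∑ i ∈ s.erase b, f i = 0 := by omega
  exact sum_eq_zero_iff.mp hrest c (mem_erase.mpr ⟨hcb, hc⟩)

lemma Finset.card_filter_eq_one_eq_sum {ι : Type*} [Fintype ι] {f : ι → ℕ}
    (h : ∀ i, f i ≤ 1) : #{i | f i = 1} = ∑ i, f i := by
  rw [card_filter]
  refine sum_congr rfl fun i _ => ?_
  rcases Nat.le_one_iff_eq_zero_or_eq_one.mp (h i) with hi | hi <;> simp [hi]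

section

variable {V : Type*} [Fintype V] {G : SimpleGraph V}

lemma sum_adj_eq_sum_of_support_subset {f : V → ℕ} {s : Finset V} (hs : ∀ u ∉ s, f u = 0)
    (v : V) : (∑ u, if G.Adj v u then f u else 0) = ∑ u ∈ s, if G.Adj v u then f u else 0 :=
  (sum_subset (subset_univ s) fun u _ hu => by simp [hs u hu]).symm

lemma pid_le_sum {f : V → ℕ} (hf : IsPIDFun G f) : pid G ≤ ∑ v, f v :=
  Nat.sInf_le ⟨f, hf, rfl⟩

lemma isPIDFun_pi_single_two {a : V} (h : ∀ v ≠ a, G.Adj v a) : IsPIDFun G (Pi.single a 2) := by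
  refine ⟨fun v => ?_, fun v hv => ?_⟩
  · by_cases hva : v = a <;> simp [hva]
  · have hva : v ≠ a := by rintro rfl; simp at hv
    rw [sum_adj_eq_sum_of_support_subset (s := {a}) (fun u hu => by simp_all)]
    simp [h v hva]

lemma pid_le_two_of_forall_adj {a : V} (h : ∀ v ≠ a, G.Adj v a) : pid G ≤ 2 := by
  simpa using pid_le_sum (isPIDFun_pi_single_two h)

namespace IsPIDFun

variable {f : V → ℕ} {a b : V}

lemma adj_and_not_adj_of_eq_zero (hf : IsPIDFun G f) (hba : b ≠ a) (ha : f a = 2) (hb : f b = 1)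
    (hrest : ∀ c, c ≠ a → c ≠ b → f c = 0) {v : V} (hv : f v = 0) :
    G.Adj v a ∧ ¬ G.Adj v b := by
  have hsum := hf.2 v hv
  rw [sum_adj_eq_sum_of_support_subset (s := {a, b}) (by simpa using hrest),
    sum_pair hba.symm, ha, hb] at hsum
  by_cases hva : G.Adj v a <;> by_cases hvb : G.Adj v b <;> simp_all

lemma forall_adj_of_preconnected (hf : IsPIDFun G f) (hconn : G.Preconnected) (hba : b ≠ a)
    (ha : f a = 2) (hb : f b = 1) (hrest : ∀ c, c ≠ a → c ≠ b → f c = 0) :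
    ∀ v ≠ a, G.Adj v a := by
  have hzero (v : V) (hv : f v = 0) := hf.adj_and_not_adj_of_eq_zero hba ha hb hrest hv
  have hadj_ba : G.Adj b a := by
    have : Nontrivial V := nontrivial_of_ne b a hba
    obtain ⟨u, hbu⟩ := hconn.exists_adj_of_nontrivial b
    by_contra hna
    have hua : u ≠ a := by rintro rfl; exact hna hbu
    exact (hzero u (hrest u hua hbu.ne.symm)).2 hbu.symm
  intro v hva
  by_cases hvb : v = b
  · exact hvb ▸ hadj_ba
  · exact (hzero v (hrest v hva hvb)).1

lemma ne_two_of_sum_eq_three (hf : IsPIDFun G f) (hconn : G.Preconnected) (hpid : 2 < pid G)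
    (hw : ∑ v, f v = 3) (v : V) : f v ≠ 2 := by
  intro hv
  have hrest : ∑ u ∈ univ.erase v, f u = 1 := by
    have := add_sum_erase univ f (mem_univ v)
    omega
  obtain ⟨b, hb, hb1, hzero⟩ := exists_eq_one_of_sum_eq_one hrest
  have hbv := ne_of_mem_erase hb
  have := pid_le_two_of_forall_adj <| hf.forall_adj_of_preconnected hconn hbv hv hb1
    fun c hcv hcb => hzero c (mem_erase.mpr ⟨hcv, mem_univ c⟩) hcb
  omega

end IsPIDFun

end

/-- In a connected graph with `pid G = 3`, every PID-function of weight `3` assigns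
label `1` to exactly three vertices and label `2` to no vertex. -/
theorem pid_three_structure {V : Type*} [Fintype V] (G : SimpleGraph V)
    (hconn : G.Connected) (hpid : pid G = 3) (f : V → ℕ)
    (hf : IsPIDFun G f) (hw : ∑ v, f v = 3) :
    (Finset.univ.filter fun v => f v = 1).card = 3 ∧ ∀ v, f v ≠ 2 := by
  have hno2 := hf.ne_two_of_sum_eq_three hconn.preconnected (by omega) hw
  have hle1 (v : V) : f v ≤ 1 := by have := hf.1 v; have := hno2 v; omega
  exact ⟨hw ▸ card_filter_eq_one_eq_sum hle1, hno2⟩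
end

section
/- For all integers n₁, n₂, n₃ ≥ 3, the complete tripartite graph K_{n₁,n₂,n₃} satisfies pid(K_{n₁,n₂,n₃}) = 3. -/
open scoped Classical

/-!
The function putting `1` on one vertex of each part is a PID-function of weight `3`: a vertex
labelled `0` sees the two labels outside its own part. Conversely, the neighbourhood of a vertex
of part `i` is everything outside part `i`, so a PID-function `f` of total weight `W` has weight
`W - 2` on every part containing a zero of `f`. If `W ≤ 2`, every part (of size `≥ 3 > W`)
contains a zero, and summing over the three parts gives `W = 3 (W - 2)`, i.e. `W = 3`.
-/

open Finset

lemma pid_eq_of_isPIDFun {V : Type*} [Fintype V] {G : SimpleGraph V} {f : V → ℕ}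
    (hf : IsPIDFun G f) (hmin : ∀ g, IsPIDFun G g → ∑ v, f v ≤ ∑ v, g v) :
    pid G = ∑ v, f v :=
  le_antisymm (Nat.sInf_le ⟨f, hf, rfl⟩) <|
    le_csInf ⟨_, f, hf, rfl⟩ fun _ ⟨g, hg, hw⟩ => hw ▸ hmin g hg

namespace SimpleGraph.completeMultipartiteGraph

variable {ι : Type*} [Fintype ι] {α : ι → Type*} [∀ i, Fintype (α i)]

lemma sum_adj_add_sum_part (f : (Σ i, α i) → ℕ) (v : Σ i, α i) :
    (∑ u, if (completeMultipartiteGraph α).Adj v u then f u else 0) + ∑ x, f ⟨v.1, x⟩ =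
      ∑ u, f u := by
  have hpart : univ.filter (fun u => ¬(completeMultipartiteGraph α).Adj v u) =
      univ.map (Function.Embedding.sigmaMk v.1) := by
    ext ⟨j, x⟩
    simp only [comap_adj, top_adj, mem_filter, mem_univ, true_and, not_not, mem_map]
    aesop
  rw [← sum_filter, ← sum_filter_add_sum_filter_not univ ((completeMultipartiteGraph α).Adj v),
    hpart, sum_map]
  rfl

lemma exists_eq_zero_of_sum_lt_card (f : (Σ i, α i) → ℕ) (i : ι)
    (hf : ∑ u, f u < Fintype.card (α i)) : ∃ x, f ⟨i, x⟩ = 0 := by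
  by_contra! hpos
  have hcard : Fintype.card (α i) ≤ ∑ x, f ⟨i, x⟩ := by
    simpa using sum_le_sum fun x (_ : x ∈ univ) => Nat.one_le_iff_ne_zero.2 (hpos x)
  have hpart : ∑ x, f ⟨i, x⟩ ≤ ∑ u, f u := by
    rw [Fintype.sum_sigma]
    exact single_le_sum (f := fun j => ∑ x, f ⟨j, x⟩) (fun _ _ => Nat.zero_le _) (mem_univ i)
  omega

lemma isPIDFun_iff {f : (Σ i, α i) → ℕ} :
    IsPIDFun (completeMultipartiteGraph α) f ↔
      (∀ v, f v ≤ 2) ∧ ∀ v, f v = 0 → ∑ x, f ⟨v.1, x⟩ + 2 = ∑ u, f u := by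
  refine and_congr_right fun _ => forall_congr' fun v => imp_congr_right fun _ => ?_
  rw [← sum_adj_add_sum_part f v, add_comm, add_left_inj, eq_comm]
  -- the two neighbour sums differ only in the `Decidable` instance of adjacency
  convert Iff.rfl

lemma card_mul_weight_of_isPIDFun {f : (Σ i, α i) → ℕ}
    (hf : IsPIDFun (completeMultipartiteGraph α) f) (hzero : ∀ i, ∃ x, f ⟨i, x⟩ = 0) :
    Fintype.card ι * ∑ u, f u = ∑ u, f u + 2 * Fintype.card ι := by
  choose z hz using hzero
  calc Fintype.card ι * ∑ u, f u
      = ∑ i, (∑ x, f ⟨i, x⟩ + 2) := by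
        rw [← smul_eq_mul, ← card_univ, ← sum_const]
        exact sum_congr rfl fun i _ => (isPIDFun_iff.1 hf |>.2 _ (hz i)).symm
    _ = ∑ u, f u + 2 * Fintype.card ι := by
        rw [sum_add_distrib, ← Fintype.sum_sigma, sum_const, card_univ, smul_eq_mul, mul_comm]

lemma three_le_weight_of_isPIDFun (hι : Fintype.card ι = 3) (hα : ∀ i, 3 ≤ Fintype.card (α i))
    {f : (Σ i, α i) → ℕ} (hf : IsPIDFun (completeMultipartiteGraph α) f) : 3 ≤ ∑ u, f u := by
  by_contra! hlt
  have hzero i : ∃ x, f ⟨i, x⟩ = 0 := exists_eq_zero_of_sum_lt_card f i (by linarith [hα i])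
  have := card_mul_weight_of_isPIDFun hf hzero
  rw [hι] at this
  omega

lemma sum_indicator_section (s : ∀ i, α i) :
    ∑ v : Σ i, α i, (if s v.1 = v.2 then 1 else 0) = Fintype.card ι := by
  rw [Fintype.sum_sigma]
  simp

lemma isPIDFun_indicator_section (hι : Fintype.card ι = 3) (s : ∀ i, α i) :
    IsPIDFun (completeMultipartiteGraph α) fun v => if s v.1 = v.2 then 1 else 0 := by
  refine isPIDFun_iff.2 ⟨fun v => by split <;> omega, fun v _ => ?_⟩
  rw [sum_indicator_section, hι]
  simp

end SimpleGraph.completeMultipartiteGraph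

open SimpleGraph.completeMultipartiteGraph

/-- For all `n₁, n₂, n₃ ≥ 3`, the complete tripartite graph `K_{n₁,n₂,n₃}` has
perfect Italian domination number `3`. -/
theorem pid_completeTripartite (n : Fin 3 → ℕ) (h : ∀ i, 3 ≤ n i) :
    pid (SimpleGraph.completeMultipartiteGraph fun i => Fin (n i)) = 3 := by
  have hparts i : 3 ≤ Fintype.card (Fin (n i)) := by simpa using h i
  let s i : Fin (n i) := ⟨0, by linarith [h i]⟩
  have hweight := sum_indicator_section s
  rw [Fintype.card_fin] at hweight
  have hf := isPIDFun_indicator_section (Fintype.card_fin 3) s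
  refine (pid_eq_of_isPIDFun hf fun g hg => ?_).trans hweight
  rw [hweight]
  exact three_le_weight_of_isPIDFun (Fintype.card_fin 3) hparts hg
end

section
/- Every connected finite simple graph G on n vertices with maximum degree Δ satisfies pid(G) ≥ 2n/(Δ + 2). -/
/-!
Every vertex `v` satisfies `2 ≤ 2 f(v) + ∑_{u ∼ v} f(u)`: either `f(v) ≥ 1`, or `f(v) = 0` and the
neighbourhood sum is exactly `2`. Summing over `v`, each `f(u)` is counted `deg u ≤ Δ` times in the
neighbourhood sums, so `2n ≤ (Δ + 2) · w(f)` for every PID-function `f`, in particular a minimum one.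
-/

open scoped Classical

namespace SimpleGraph

variable {V : Type*} [Fintype V] (G : SimpleGraph V)

theorem sum_sum_adj_eq_sum_degree_mul (f : V → ℕ) :
    ∑ v, ∑ u, (if G.Adj v u then f u else 0) = ∑ u, G.degree u * f u := by
  rw [Finset.sum_comm]
  refine Finset.sum_congr rfl fun u _ => ?_
  rw [← Finset.sum_filter, Finset.sum_const, smul_eq_mul, ← card_neighborFinset_eq_degree,
    neighborFinset_eq_filter]
  simp only [adj_comm]

theorem sum_degree_mul_le_maxDegree_mul_sum (f : V → ℕ) :
    ∑ u, G.degree u * f u ≤ G.maxDegree * ∑ u, f u := by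
  rw [Finset.mul_sum]
  exact Finset.sum_le_sum fun u _ => Nat.mul_le_mul_right _ (G.degree_le_maxDegree u)

end SimpleGraph

namespace IsPIDFun

variable {V : Type*} [Fintype V] {G : SimpleGraph V} {f : V → ℕ}

theorem two_le_two_mul_add_sum_adj (hf : IsPIDFun G f) (v : V) :
    2 ≤ 2 * f v + ∑ u, if G.Adj v u then f u else 0 := by
  rcases Nat.eq_zero_or_pos (f v) with h | h
  · rw [hf.2 v h]; omega
  · omega

theorem two_mul_card_le (hf : IsPIDFun G f) :
    2 * Fintype.card V ≤ (G.maxDegree + 2) * ∑ v, f v :=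
  calc 2 * Fintype.card V = ∑ _ : V, 2 := by simp [mul_comm]
    _ ≤ ∑ v, (2 * f v + ∑ u, if G.Adj v u then f u else 0) :=
        Finset.sum_le_sum fun v _ => hf.two_le_two_mul_add_sum_adj v
    _ = 2 * ∑ v, f v + ∑ u, G.degree u * f u := by
        rw [Finset.sum_add_distrib, ← Finset.mul_sum, G.sum_sum_adj_eq_sum_degree_mul]
    _ ≤ 2 * ∑ v, f v + G.maxDegree * ∑ v, f v :=
        Nat.add_le_add_left (G.sum_degree_mul_le_maxDegree_mul_sum f) _
    _ = (G.maxDegree + 2) * ∑ v, f v := by ring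

end IsPIDFun

theorem exists_isPIDFun_pid_eq_sum {V : Type*} [Fintype V] (G : SimpleGraph V) :
    ∃ f, IsPIDFun G f ∧ pid G = ∑ v, f v :=
  Nat.sInf_mem (s := {w | ∃ f, IsPIDFun G f ∧ w = ∑ v, f v})
    ⟨_, fun _ => 1, ⟨fun _ => one_le_two, fun _ h => absurd h one_ne_zero⟩, rfl⟩

theorem pid_ge_two_card_div_maxDegree_add_two_general {V : Type*} [Fintype V]
    (G : SimpleGraph V) :
    2 * (Fintype.card V : ℝ) / ((G.maxDegree : ℝ) + 2) ≤ (pid G : ℝ) := by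
  obtain ⟨f, hf, hpid⟩ := exists_isPIDFun_pid_eq_sum G
  rw [div_le_iff₀ (by positivity), mul_comm (pid G : ℝ), hpid]
  exact_mod_cast hf.two_mul_card_le

/-- Every connected graph `G` on `n` vertices with maximum degree `Δ` satisfies
`pid G ≥ 2n / (Δ + 2)`. -/
theorem pid_ge_two_card_div_maxDegree_add_two {V : Type*} [Fintype V]
    (G : SimpleGraph V) (hconn : G.Connected) :
    2 * (Fintype.card V : ℝ) / ((G.maxDegree : ℝ) + 2) ≤ (pid G : ℝ) :=
  pid_ge_two_card_div_maxDegree_add_two_general G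
end
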